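/- arXiv:math/0509539 — 4 statements merged into one kernel-verified Lean document; each statement's English description precedes it below -/
import Mathlib

section
/- Let A, B be positive bounded operators on a complex Hilbert space H, and let V, W be partial isometries with V*VA = A, W*WB = B. If A(V*W - I)B = 0, then for all vectors x, y ∈ H, ‖VAx + WBy‖ = ‖Ax + By‖. -/
open ContinuousLinearMap

variable {H : Type*} [NormedAddCommGroup H] [InnerProductSpace ℂ H] [CompleteSpace H]

/-- `U` is a partial isometry iff `U*U` is an (orthogonal) projection. -/
def IsPartialIsometry (U : H →L[ℂ] H) : Prop :=
  IsIdempotentElem (adjoint U * U)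

/-- Absolute value `|X| = (X*X)^(1/2)`. -/
noncomputable def opAbs (X : H →L[ℂ] H) : H →L[ℂ] H :=
  CFC.sqrt (adjoint X * X)

local notation "⟪" x ", " y "⟫" => @inner ℂ _ _ x y

theorem stmt1 (A B V W : H →L[ℂ] H) (hA : 0 ≤ A) (hB : 0 ≤ B)
    (hV : IsPartialIsometry V) (hW : IsPartialIsometry W)
    (hVA : adjoint V * V * A = A) (hWB : adjoint W * W * B = B)
    (h : A * (adjoint V * W - 1) * B = 0) :
    ∀ x y : H, ‖V (A x) + W (B y)‖ = ‖A x + B y‖ := by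
  intro x y
  have hAsa : adjoint A = A := by
    simpa [star_eq_adjoint] using (IsSelfAdjoint.of_nonneg hA).star_eq
  have hAB : A * ((adjoint V * W) * B) = A * B := by
    have h2 : A * (adjoint V * W) * B - A * B = 0 := by
      rw [← h]; noncomm_ring
    rw [← mul_assoc]
    exact sub_eq_zero.mp h2
  have hcross : ⟪V (A x), W (B y)⟫ = ⟪A x, B y⟫ := by
    calc ⟪V (A x), W (B y)⟫ = ⟪A x, adjoint V (W (B y))⟫ := by
          rw [adjoint_inner_right]
      _ = ⟪x, adjoint A (((adjoint V * W) * B) y)⟫ := by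
          simp only [adjoint_inner_right, mul_apply_eq_comp]
      _ = ⟪x, (A * ((adjoint V * W) * B)) y⟫ := by rw [hAsa]; simp only [mul_apply_eq_comp]
      _ = ⟪x, (A * B) y⟫ := by rw [hAB]
      _ = ⟪x, adjoint A (B y)⟫ := by rw [hAsa]; simp only [mul_apply_eq_comp]
      _ = ⟪A x, B y⟫ := by rw [adjoint_inner_right]
  have hVnorm : ⟪V (A x), V (A x)⟫ = ⟪A x, A x⟫ := by
    calc ⟪V (A x), V (A x)⟫ = ⟪A x, adjoint V (V (A x))⟫ := by
          rw [adjoint_inner_right]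
      _ = ⟪x, adjoint A ((adjoint V * V * A) x)⟫ := by
          simp only [adjoint_inner_right, mul_apply_eq_comp]
      _ = ⟪x, adjoint A (A x)⟫ := by rw [hVA]
      _ = ⟪A x, A x⟫ := by rw [adjoint_inner_right]
  have hBsa : adjoint B = B := by
    simpa [star_eq_adjoint] using (IsSelfAdjoint.of_nonneg hB).star_eq
  have hWnorm : ⟪W (B y), W (B y)⟫ = ⟪B y, B y⟫ := by
    calc ⟪W (B y), W (B y)⟫ = ⟪B y, adjoint W (W (B y))⟫ := by
          rw [adjoint_inner_right]
      _ = ⟪y, adjoint B ((adjoint W * W * B) y)⟫ := by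
          simp only [adjoint_inner_right, mul_apply_eq_comp]
      _ = ⟪y, adjoint B (B y)⟫ := by rw [hWB]
      _ = ⟪B y, B y⟫ := by rw [adjoint_inner_right]
  have hcross' : ⟪W (B y), V (A x)⟫ = ⟪B y, A x⟫ := by
    rw [← inner_conj_symm, hcross, inner_conj_symm]
  rw [@norm_eq_sqrt_re_inner ℂ, @norm_eq_sqrt_re_inner ℂ _ _ _ _ (A x + B y)]
  rw [inner_add_add_self, inner_add_add_self, hcross, hcross', hVnorm, hWnorm]
end

section
/- For bounded linear operators X, Y on a complex Hilbert space H, if there exists a partial isometry U such that X = U|X| and Y = U|Y|, then the triangle equality |X + Y| = |X| + |Y| holds. -/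
open ContinuousLinearMap

variable {H : Type*} [NormedAddCommGroup H] [InnerProductSpace ℂ H] [CompleteSpace H]

set_option synthInstance.maxHeartbeats 1000000 in
lemma opAbs_nonneg (X : H →L[ℂ] H) : 0 ≤ opAbs X := CFC.sqrt_nonneg _

lemma opAbs_sq (X : H →L[ℂ] H) : (opAbs X) ^ 2 = adjoint X * X :=
  CFC.sq_sqrt _ (star_mul_self_nonneg X)

lemma opAbs_selfAdjoint (X : H →L[ℂ] H) : star (opAbs X) = opAbs X :=
  IsSelfAdjoint.star_eq (opAbs_nonneg X).isSelfAdjoint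

lemma proj_fix {U : H →L[ℂ] H} (hU : IsPartialIsometry U) (X : H →L[ℂ] H)
    (hX : X = U * opAbs X) : (adjoint U * U) * opAbs X = opAbs X := by
  set p := adjoint U * U with hp
  have hpp : p * p = p := hU
  have hpstar : star p = p := by
    simp [hp, star_mul, adjoint_adjoint, ContinuousLinearMap.star_eq_adjoint]
  have key : opAbs X * p * opAbs X = opAbs X ^ 2 := by
    have h1 := opAbs_sq X
    conv_rhs at h1 => rw [hX]
    have h2 : adjoint (U * opAbs X) = opAbs X * adjoint U := by
      rw [← ContinuousLinearMap.star_eq_adjoint, star_mul, opAbs_selfAdjoint,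
        ContinuousLinearMap.star_eq_adjoint]
    rw [h1, h2, hp]
    noncomm_ring
  set q := 1 - p with hq
  have hqidem : q * q = q := by
    simp [hq, mul_sub, sub_mul, hpp]
  have hqstar : star q = q := by rw [hq, star_sub, star_one, hpstar]
  have hz : star (q * opAbs X) * (q * opAbs X) = 0 := by
    rw [star_mul, opAbs_selfAdjoint, hqstar]
    have : opAbs X * q * (q * opAbs X) = opAbs X * (q * q) * opAbs X := by
      noncomm_ring
    rw [this, hqidem, hq, mul_sub, sub_mul, mul_one, key, ← sq, sub_self]
  have hqX : q * opAbs X = 0 := (CStarRing.star_mul_self_eq_zero_iff _).mp hz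
  rw [hq, sub_mul, one_mul, sub_eq_zero] at hqX
  exact hqX.symm

theorem stmt5 (X Y : H →L[ℂ] H)
    (h : ∃ U : H →L[ℂ] H, IsPartialIsometry U ∧ X = U * opAbs X ∧ Y = U * opAbs Y) :
    opAbs (X + Y) = opAbs X + opAbs Y := by
  obtain ⟨U, hU, hX, hY⟩ := h
  have hpX := proj_fix hU X hX
  have hpY := proj_fix hU Y hY
  have hXY : X + Y = U * (opAbs X + opAbs Y) := by rw [mul_add, ← hX, ← hY]
  have hadj : adjoint (X + Y) * (X + Y) = (opAbs X + opAbs Y) ^ 2 := by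
    rw [hXY, ← ContinuousLinearMap.star_eq_adjoint, star_mul, star_add,
      opAbs_selfAdjoint, opAbs_selfAdjoint, ContinuousLinearMap.star_eq_adjoint]
    calc (opAbs X + opAbs Y) * adjoint U * (U * (opAbs X + opAbs Y))
        = (opAbs X + opAbs Y) * ((adjoint U * U) * opAbs X + (adjoint U * U) * opAbs Y) := by
          noncomm_ring
      _ = (opAbs X + opAbs Y) * (opAbs X + opAbs Y) := by rw [hpX, hpY]
      _ = (opAbs X + opAbs Y) ^ 2 := by rw [sq]
  rw [opAbs, hadj]
  exact CFC.sqrt_sq _ (add_nonneg (opAbs_nonneg X) (opAbs_nonneg Y))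
end

section
/- Let D be a bounded operator on H and V, W partial isometries such that V*W is a contraction. If the operator i·D*(V*W − I)D is selfadjoint, then D*(V*W − I)D = 0. -/
open ContinuousLinearMap

variable {H : Type*} [NormedAddCommGroup H] [InnerProductSpace ℂ H] [CompleteSpace H]

theorem stmt16 (D V W : H →L[ℂ] H)
    (hV : IsPartialIsometry V) (hW : IsPartialIsometry W)
    (hVW : ‖adjoint V * W‖ ≤ 1)
    (hsa : IsSelfAdjoint (Complex.I • (adjoint D * (adjoint V * W - 1) * D))) :
    adjoint D * (adjoint V * W - 1) * D = 0 := by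
  set C := adjoint V * W with hC
  set T := adjoint D * (C - 1) * D with hT
  -- T is skew-adjoint
  have hskew : adjoint T = -T := by
    have h : star Complex.I • star T = Complex.I • T := by
      have := hsa
      rwa [IsSelfAdjoint, star_smul] at this
    rw [Complex.star_def, Complex.conj_I, neg_smul] at h
    have h3 : Complex.I • star T = Complex.I • (-T) := by
      rw [smul_neg, ← h, neg_neg]
    have h4 : star T = -T := smul_right_injective _ Complex.I_ne_zero h3
    rw [← ContinuousLinearMap.star_eq_adjoint]
    exact h4
  -- quadratic form vanishes
  have hquad : ∀ x : H, inner ℂ (T x) x = (0 : ℂ) := by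
    intro x
    have hconj : starRingEnd ℂ (inner ℂ (T x) x) = - inner ℂ (T x) x := by
      have h1 : (inner ℂ x (T x) : ℂ) = inner ℂ ((adjoint T) x) x :=
        (ContinuousLinearMap.adjoint_inner_left T x x).symm
      rw [hskew] at h1
      simp only [ContinuousLinearMap.neg_apply, inner_neg_left] at h1
      rw [inner_conj_symm, h1]
    have hre0 : (inner ℂ (T x) x : ℂ).re = 0 := by
      have := congrArg Complex.re hconj
      simp only [Complex.conj_re, Complex.neg_re] at this
      linarith
    set y := D x with hy
    have hTx : (inner ℂ (T x) x : ℂ) = inner ℂ (C y) y - inner ℂ y y := by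
      have h5 : T x = adjoint D ((C - 1) (D x)) := by
        simp [hT, ContinuousLinearMap.mul_apply]
      rw [h5, ContinuousLinearMap.adjoint_inner_left]
      simp [inner_sub_left, hy]
    set w : ℂ := inner ℂ (C y) y with hw
    have hyy : (inner ℂ y y : ℂ) = (‖y‖ : ℂ) ^ 2 := inner_self_eq_norm_sq_to_K y
    have hrew : w.re = ‖y‖ ^ 2 := by
      rw [hTx, hyy] at hre0
      simp only [Complex.sub_re] at hre0
      have : ((‖y‖ : ℂ) ^ 2).re = ‖y‖ ^ 2 := by
        rw [← Complex.ofReal_pow, Complex.ofReal_re]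
      linarith
    have habs : ‖w‖ ≤ ‖y‖ ^ 2 := by
      calc ‖w‖ = ‖w‖ := rfl
        _ ≤ ‖C y‖ * ‖y‖ := norm_inner_le_norm _ _
        _ ≤ (‖C‖ * ‖y‖) * ‖y‖ := by gcongr; exact C.le_opNorm y
        _ ≤ (1 * ‖y‖) * ‖y‖ := by gcongr
        _ = ‖y‖ ^ 2 := by ring
    have him : w.im = 0 := by
      have h1 : w.re ^ 2 + w.im ^ 2 = ‖w‖ ^ 2 := by
        rw [Complex.sq_norm, Complex.normSq_apply]; ring
      nlinarith [norm_nonneg w]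
    have hweq : w = ((‖y‖ ^ 2 : ℝ) : ℂ) := by
      apply Complex.ext
      · rw [hrew, Complex.ofReal_re]
      · rw [him, Complex.ofReal_im]
    rw [hTx, hweq, hyy]
    push_cast
    ring
  have hlin : (T : H →ₗ[ℂ] H) = 0 := (inner_map_self_eq_zero _).mp (fun x => hquad x)
  exact ContinuousLinearMap.coe_injective (hlin.trans ContinuousLinearMap.coe_zero.symm)
end

section
/- Let X, Y ∈ B(H) with polar decompositions X = V|X|, Y = W|Y| (V*V|X| = |X|, W*W|Y| = |Y|). If |X|(V*W − I)|Y| = 0, then there exists a partial isometry U with X = U|X| and Y = U|Y|. -/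
open ContinuousLinearMap

variable {H : Type*} [NormedAddCommGroup H] [InnerProductSpace ℂ H] [CompleteSpace H]

set_option maxHeartbeats 2000000 in
set_option synthInstance.maxHeartbeats 1000000 in
open scoped InnerProductSpace in
theorem aux_stmt17 (A B V W : H →L[ℂ] H)
    (hA : IsSelfAdjoint A) (hB : IsSelfAdjoint B)
    (hV' : adjoint V * V * A = A) (hW' : adjoint W * W * B = B)
    (h : A * (adjoint V * W) * B = A * B) :
    ∃ U : H →L[ℂ] H, IsPartialIsometry U ∧ U * A = V * A ∧ U * B = W * B := by
  classical
  -- `p (x, y) = A x + B y`, `g (x, y) = V (A x) + W (B y)`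
  set p : (H × H) →L[ℂ] H := (A.comp (fst ℂ H H)) + (B.comp (snd ℂ H H)) with hp
  set g : (H × H) →L[ℂ] H := ((V * A).comp (fst ℂ H H)) + ((W * B).comp (snd ℂ H H)) with hg
  have hpu : ∀ u : H × H, p u = A u.1 + B u.2 := fun u => rfl
  have hgu : ∀ u : H × H, g u = V (A u.1) + W (B u.2) := fun u => rfl
  -- selfadjointness gives `⟪A x, z⟫ = ⟪x, A z⟫`
  have hAin : ∀ x z : H, ⟪A x, z⟫_ℂ = ⟪x, A z⟫_ℂ := fun x z => by
    conv_rhs => rw [← hA.adjoint_eq]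
    rw [adjoint_inner_right]
  -- the four inner product identities
  have keyVV : ∀ x y : H, ⟪V (A x), V (A y)⟫_ℂ = ⟪A x, A y⟫_ℂ := fun x y => by
    rw [← adjoint_inner_right]
    congr 1
    exact congrFun (congrArg DFunLike.coe hV') y
  have keyWW : ∀ x y : H, ⟪W (B x), W (B y)⟫_ℂ = ⟪B x, B y⟫_ℂ := fun x y => by
    rw [← adjoint_inner_right]
    congr 1
    exact congrFun (congrArg DFunLike.coe hW') y
  have keyVW : ∀ x y : H, ⟪V (A x), W (B y)⟫_ℂ = ⟪A x, B y⟫_ℂ := fun x y => by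
    rw [← adjoint_inner_right, hAin, hAin]
    congr 1
    have := congrFun (congrArg DFunLike.coe h) y
    simpa [ContinuousLinearMap.mul_apply] using this
  have keyWV : ∀ x y : H, ⟪W (B x), V (A y)⟫_ℂ = ⟪B x, A y⟫_ℂ := fun x y => by
    have := keyVW y x
    calc ⟪W (B x), V (A y)⟫_ℂ = starRingEnd ℂ ⟪V (A y), W (B x)⟫_ℂ := by
          rw [inner_conj_symm]
      _ = starRingEnd ℂ ⟪A y, B x⟫_ℂ := by rw [this]
      _ = ⟪B x, A y⟫_ℂ := by rw [inner_conj_symm]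
  -- `g` preserves the inner products computed through `p`
  have key : ∀ u v : H × H, ⟪g u, g v⟫_ℂ = ⟪p u, p v⟫_ℂ := by
    intro u v
    rw [hpu, hpu, hgu, hgu]
    simp only [inner_add_left, inner_add_right]
    rw [keyVV, keyVW, keyWV, keyWW]
  -- hence `g` is determined by `p`
  have peq : ∀ u v : H × H, p u = p v → g u = g v := by
    intro u v huv
    have h0 : ⟪g (u - v), g (u - v)⟫_ℂ = 0 := by
      rw [key, map_sub, huv, sub_self, inner_zero_left]
    rw [map_sub] at h0
    exact sub_eq_zero.mp (inner_self_eq_zero.mp h0)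
  -- the range of `p` and its closure
  set S : Submodule ℂ H := LinearMap.range (p : (H × H) →ₗ[ℂ] H) with hSdef
  have hc : ∀ s : S, p (Classical.choose s.2) = (s : H) := fun s => Classical.choose_spec s.2
  -- the well-defined linear map on `S`
  set f₀ : S →ₗ[ℂ] H :=
    { toFun := fun s => g (Classical.choose s.2)
      map_add' := by
        intro s t
        rw [← map_add]
        refine peq _ _ ?_
        rw [hc _, map_add, hc _, hc _, Submodule.coe_add]
      map_smul' := by
        intro c s
        rw [RingHom.id_apply, ← map_smul]
        refine peq _ _ ?_
        rw [hc _, map_smul, hc _, Submodule.coe_smul] } with hf₀def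
  have hf₀ : ∀ (x : H) (hx : x ∈ S), f₀ ⟨x, hx⟩ = g (Classical.choose hx) := fun x hx => rfl
  -- `f₀` is an isometry
  have fnorm : ∀ s : S, ‖f₀ s‖ = ‖s‖ := by
    intro s
    have h1 := key (Classical.choose s.2) (Classical.choose s.2)
    rw [hc s] at h1
    rw [inner_self_eq_norm_sq_to_K, inner_self_eq_norm_sq_to_K] at h1
    have h2 : ‖g (Classical.choose s.2)‖ ^ 2 = ‖(s : H)‖ ^ 2 := by exact_mod_cast h1
    have h3 : ‖f₀ s‖ ^ 2 = ‖(s : H)‖ ^ 2 := h2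
    have h4 : ‖s‖ = ‖(s : H)‖ := rfl
    rw [h4]
    nlinarith [norm_nonneg (f₀ s), norm_nonneg ((s : H))]
  set fS : S →ₗᵢ[ℂ] H := ⟨f₀, fnorm⟩ with hfSdef
  set K : Submodule ℂ H := S.topologicalClosure with hKdef
  haveI : CompleteSpace K := S.isClosed_topologicalClosure.completeSpace_coe
  have hSK : S ≤ K := S.le_topologicalClosure
  have hiso : Isometry (S.inclusion hSK) := Isometry.of_dist_eq fun a b => rfl
  set e : S →L[ℂ] K := ⟨S.inclusion hSK, hiso.continuous⟩ with hedef
  have h_e : IsUniformInducing e := hiso.isUniformInducing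
  have h_dense : DenseRange e := by
    intro k
    rw [closure_subtype]
    have him : (Subtype.val '' Set.range e) = (S : Set H) := by
      ext x
      constructor
      · rintro ⟨k', ⟨s, rfl⟩, rfl⟩; exact s.2
      · intro hx; exact ⟨e ⟨x, hx⟩, ⟨⟨x, hx⟩, rfl⟩, rfl⟩
    rw [him]
    exact S.topologicalClosure_coe ▸ k.2
  set fbar : K →L[ℂ] H := ContinuousLinearMap.extend fS.toContinuousLinearMap e
    with hfbardef
  have hfe : ∀ s : S, fbar (e s) = f₀ s := fun s =>
    ContinuousLinearMap.extend_eq fS.toContinuousLinearMap h_dense h_e s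
  have hfnorm : ∀ k : K, ‖fbar k‖ = ‖k‖ := by
    intro k
    refine h_dense.induction_on k ?_ ?_
    · exact isClosed_eq fbar.continuous.norm continuous_norm
    · intro s
      rw [hfe, fnorm]
      rfl
  set fK : K →ₗᵢ[ℂ] H := ⟨fbar.toLinearMap, hfnorm⟩ with hfKdef
  set U : H →L[ℂ] H := fbar.comp (K.orthogonalProjectionOnto) with hUdef
  have hUK : ∀ a : H, U a = fK (K.orthogonalProjectionOnto a) := fun a => rfl
  have hUp : ∀ u : H × H, U (p u) = g u := by
    intro u
    have hmem : p u ∈ S := ⟨u, rfl⟩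
    have hPK : K.orthogonalProjectionOnto (p u) = ⟨p u, hSK hmem⟩ :=
      Submodule.orthogonalProjectionOnto_mem_subspace_eq_self (⟨p u, hSK hmem⟩ : K)
    show fbar (K.orthogonalProjectionOnto (p u)) = g u
    rw [hPK]
    have he2 : (⟨p u, hSK hmem⟩ : K) = e ⟨p u, hmem⟩ := rfl
    rw [he2, hfe, hf₀ _ hmem]
    exact peq _ _ (hc ⟨p u, hmem⟩)
  have hUA : U * A = V * A := by
    ext x
    have h1 : A x = p (x, 0) := by rw [hpu]; simp
    show U (A x) = V (A x)
    have h2 : U (A x) = g (x, 0) := by rw [h1]; exact hUp _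
    rw [h2, hgu]
    simp
  have hUB : U * B = W * B := by
    ext y
    have h1 : B y = p (0, y) := by rw [hpu]; simp
    show U (B y) = W (B y)
    have h2 : U (B y) = g (0, y) := by rw [h1]; exact hUp _
    rw [h2, hgu]
    simp
  have hadj : adjoint U * U = K.subtypeL.comp (K.orthogonalProjectionOnto) := by
    ext a
    refine ext_inner_right ℂ fun b => ?_
    show ⟪adjoint U (U a), b⟫_ℂ = ⟪(K.orthogonalProjectionOnto a : H), b⟫_ℂ
    rw [adjoint_inner_left]
    have h1 : ⟪U a, U b⟫_ℂ
        = ⟪(K.orthogonalProjectionOnto a : H), (K.orthogonalProjectionOnto b : H)⟫_ℂ := by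
      rw [hUK, hUK, LinearIsometry.inner_map_map, Submodule.coe_inner]
    rw [h1]
    have h2 : ⟪(K.orthogonalProjectionOnto a : H), b - (K.orthogonalProjectionOnto b : H)⟫_ℂ = 0 :=
      (Submodule.mem_orthogonal K _).mp (Submodule.sub_starProjection_mem_orthogonal (K := K) b) _
        (K.orthogonalProjectionOnto a).2
    rw [inner_sub_right] at h2
    exact (sub_eq_zero.mp h2).symm
  refine ⟨U, ?_, hUA, hUB⟩
  show IsIdempotentElem (adjoint U * U)
  rw [hadj]
  unfold IsIdempotentElem
  ext a
  show K.subtypeL (K.orthogonalProjectionOnto ((K.orthogonalProjectionOnto a : H)))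
      = K.subtypeL (K.orthogonalProjectionOnto a)
  rw [Submodule.orthogonalProjectionOnto_mem_subspace_eq_self]

set_option synthInstance.maxHeartbeats 1000000 in
theorem stmt17 (X Y V W : H →L[ℂ] H)
    (hV : IsPartialIsometry V) (hW : IsPartialIsometry W)
    (hX : X = V * opAbs X) (hY : Y = W * opAbs Y)
    (hV' : adjoint V * V * opAbs X = opAbs X) (hW' : adjoint W * W * opAbs Y = opAbs Y)
    (h : opAbs X * (adjoint V * W - 1) * opAbs Y = 0) :
    ∃ U : H →L[ℂ] H, IsPartialIsometry U ∧ X = U * opAbs X ∧ Y = U * opAbs Y := by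
  have hA : IsSelfAdjoint (opAbs X) := IsSelfAdjoint.of_nonneg (CFC.sqrt_nonneg _)
  have hB : IsSelfAdjoint (opAbs Y) := IsSelfAdjoint.of_nonneg (CFC.sqrt_nonneg _)
  have h' : opAbs X * (adjoint V * W) * opAbs Y = opAbs X * opAbs Y := by
    rw [mul_sub, mul_one, sub_mul, sub_eq_zero] at h
    exact h
  obtain ⟨U, hU, hUA, hUB⟩ := aux_stmt17 (opAbs X) (opAbs Y) V W hA hB hV' hW' h'
  exact ⟨U, hU, hX.trans hUA.symm, hY.trans hUB.symm⟩
end
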